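/- arXiv:2207.07455 — 5 statements merged into one kernel-verified Lean document; each statement's English description precedes it below -/
import Mathlib

section
/- Let V be a p-adic vertex algebra with vacuum 𝟏 satisfying |𝟏| ≤ 1 and creativity a(-1)𝟏 = a. Then |a| ≤ |Y(a,z)| for all a ∈ V; consequently the state-field correspondence Y is injective. If moreover V is submultiplicative then |a| = |Y(a,z)|. -/
open Filter

variable {p : ℕ} [Fact p.Prime] {V : Type*} [NormedAddCommGroup V] [NormedSpace ℚ_[p] V]

/-- A `p`-adic field on a `p`-adic Banach space `V`, given by its modes
`A n : V →L[ℚ_[p]] V`: the modes are uniformly bounded, and `A n b → 0` as `n → ∞`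
for every `b ∈ V`. -/
def IsPadicField (A : ℤ → V →L[ℚ_[p]] V) : Prop :=
  (∃ M : ℝ, 0 ≤ M ∧ ∀ (n : ℤ) (b : V), ‖A n b‖ ≤ M * ‖b‖) ∧
    ∀ b : V, Tendsto (fun n : ℤ => A n b) atTop (nhds 0)

/-- A `p`-adic vertex algebra: a `p`-adic Banach space `V` with a continuous linear
state–field correspondence `Y` taking values in `p`-adic fields, a vacuum vector `𝟏`
of norm at most `1`, satisfying creativity and the `p`-adic Jacobi identity (whose
sums now converge `p`-adically rather than truncating). -/
structure PadicVertexAlgebra (p : ℕ) [Fact p.Prime] (V : Type*) [NormedAddCommGroup V]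
    [NormedSpace ℚ_[p] V] [CompleteSpace V] [IsUltrametricDist V] where
  /-- the state–field correspondence, recorded through its modes `Y a n = a(n)` -/
  Y : V →ₗ[ℚ_[p]] (ℤ → V →L[ℚ_[p]] V)
  /-- the vacuum vector `𝟏` -/
  one : V
  /-- each `Y(a,z)` is a `p`-adic field -/
  isField : ∀ a : V, IsPadicField (Y a)
  /-- `Y` is bounded (equivalently, continuous) for the sup-norm on fields -/
  Ybound : ∃ C : ℝ, 0 ≤ C ∧ ∀ (a : V) (n : ℤ), ‖Y a n‖ ≤ C * ‖a‖
  /-- vacuum normalization `|𝟏| ≤ 1` -/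
  norm_one : ‖one‖ ≤ 1
  /-- creativity: `a(-1)𝟏 = a` -/
  create_neg_one : ∀ a : V, Y a (-1) one = a
  /-- creativity: `a(n)𝟏 = 0` for `n ≥ 0` -/
  create_nonneg : ∀ a : V, ∀ n : ℤ, 0 ≤ n → Y a n one = 0
  /-- the `p`-adic Jacobi identity -/
  jacobi : ∀ u v w : V, ∀ r s t : ℤ,
    ∑' i : ℕ, Ring.choose r i • Y (Y u (t + i) v) (r + s - i) w =
    ∑' i : ℕ, ((-1) ^ i * Ring.choose t i : ℤ) •
      (Y u (r + t - i) (Y v (s + i) w)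
        - (((-1 : ℤˣ) ^ t : ℤˣ) : ℤ) • Y v (s + t - i) (Y u (r + i) w))

namespace PadicVertexAlgebra

variable [CompleteSpace V] [IsUltrametricDist V] (A : PadicVertexAlgebra p V)

theorem bddAbove_range_norm_Y (a : V) : BddAbove (Set.range fun n : ℤ => ‖A.Y a n‖) := by
  obtain ⟨C, -, hC⟩ := A.Ybound
  exact ⟨C * ‖a‖, by rintro x ⟨n, rfl⟩; exact hC a n⟩

theorem norm_le_norm_Y_neg_one (a : V) : ‖a‖ ≤ ‖A.Y a (-1)‖ :=
  calc ‖a‖ = ‖A.Y a (-1) A.one‖ := by rw [A.create_neg_one]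
    _ ≤ ‖A.Y a (-1)‖ * ‖A.one‖ := (A.Y a (-1)).le_opNorm A.one
    _ ≤ ‖A.Y a (-1)‖ := mul_le_of_le_one_right (norm_nonneg _) A.norm_one

theorem norm_le_iSup_norm_Y (a : V) : ‖a‖ ≤ ⨆ n : ℤ, ‖A.Y a n‖ :=
  (A.norm_le_norm_Y_neg_one a).trans (le_ciSup (A.bddAbove_range_norm_Y a) (-1))

theorem Y_injective : Function.Injective A.Y := fun a b hab => by
  rw [← A.create_neg_one a, hab, A.create_neg_one]

theorem iSup_norm_Y_le_of_norm_Y_apply_le {a : V}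
    (hsub : ∀ (n : ℤ) (b : V), ‖A.Y a n b‖ ≤ ‖a‖ * ‖b‖) :
    (⨆ n : ℤ, ‖A.Y a n‖) ≤ ‖a‖ :=
  ciSup_le fun n => (A.Y a n).opNorm_le_bound (norm_nonneg a) (hsub n)

end PadicVertexAlgebra

/-- In a `p`-adic vertex algebra, `|a| ≤ |Y(a,z)| = supₙ ‖a(n)‖`; consequently the
state–field correspondence is injective. If moreover `V` is submultiplicative,
then `|a| = |Y(a,z)|`. -/
theorem padicVertexAlgebra_norm_le_field_norm
    (p : ℕ) [Fact p.Prime] (V : Type*) [NormedAddCommGroup V] [NormedSpace ℚ_[p] V]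
    [CompleteSpace V] [IsUltrametricDist V] (A : PadicVertexAlgebra p V) :
    (∀ a : V, ‖a‖ ≤ ⨆ n : ℤ, ‖A.Y a n‖) ∧
    Function.Injective A.Y ∧
    ((∀ (a : V) (n : ℤ) (b : V), ‖A.Y a n b‖ ≤ ‖a‖ * ‖b‖) →
      ∀ a : V, (⨆ n : ℤ, ‖A.Y a n‖) = ‖a‖) :=
  ⟨A.norm_le_iSup_norm_Y, A.Y_injective, fun hsub a =>
    le_antisymm (A.iSup_norm_Y_le_of_norm_Y_apply_le (hsub a)) (A.norm_le_iSup_norm_Y a)⟩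
end

section
/- Let V be a p-adic Banach space, let Y: V → 𝓕(V) be a continuous linear state-field map, and let u, v, w ∈ V. Then for all r, s, t ∈ ℤ each of the three series ∑_{i≥0} C(r,i)(u(t+i)v)(r+s-i)w, ∑_{i≥0} (-1)^i C(t,i) u(r+t-i)(v(s+i)w), and ∑_{i≥0} (-1)^{t+i} C(t,i) v(s+t-i)(u(r+i)w) converges in V. -/
open Filter

variable {p : ℕ} [Fact p.Prime] {V : Type*} [NormedAddCommGroup V] [NormedSpace ℚ_[p] V]

/-! In each series the `i`-th vector tends to `0`: in the first because
`‖Y a n w‖ ≤ C ‖w‖ ‖a‖` uniformly in `n` and `u(t+i)v → 0`, in the other two because the outer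
modes are uniformly bounded and the inner vectors `v(s+i)w`, `u(r+i)w` tend to `0`. Integer
coefficients have norm at most one in an ultrametric space, and in a complete ultrametric space
every null sequence is summable. -/

theorem summable_zsmul_of_tendsto_zero {E : Type*} [NormedAddCommGroup E] [CompleteSpace E]
    [IsUltrametricDist E] (c : ℕ → ℤ) {f : ℕ → E} (hf : Tendsto f atTop (nhds 0)) :
    Summable fun i => c i • f i := by
  refine NonarchimedeanAddGroup.summable_of_tendsto_cofinite_zero ?_
  rw [Nat.cofinite_eq_atTop]
  refine (Asymptotics.IsBigO.of_bound' ?_).trans_tendsto hf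
  exact Eventually.of_forall fun i => IsUltrametricDist.norm_zsmul_le (f i) (c i)

namespace IsPadicField

variable {A : ℤ → V →L[ℚ_[p]] V}

theorem tendsto_add_nat (hA : IsPadicField A) (c : ℤ) (b : V) :
    Tendsto (fun i : ℕ => A (c + i) b) atTop (nhds 0) :=
  (hA.2 b).comp (tendsto_atTop_add_const_left atTop c tendsto_natCast_atTop_atTop)

theorem tendsto_apply_of_tendsto_zero {ι : Type*} {l : Filter ι} (hA : IsPadicField A)
    (n : ι → ℤ) {x : ι → V} (hx : Tendsto x l (nhds 0)) :
    Tendsto (fun i => A (n i) (x i)) l (nhds 0) := by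
  obtain ⟨M, -, hM⟩ := hA.1
  exact (Asymptotics.IsBigO.of_bound M (Eventually.of_forall fun i => hM _ _)).trans_tendsto hx

end IsPadicField

/-- For a continuous linear state–field map `Y : V → 𝓕(V)` on a `p`-adic Banach
space, each of the three series appearing in the `p`-adic Jacobi identity
converges in `V`. -/
theorem padic_jacobi_series_converge
    [CompleteSpace V] [IsUltrametricDist V]
    (Y : V →ₗ[ℚ_[p]] (ℤ → V →L[ℚ_[p]] V))
    (hfield : ∀ a : V, IsPadicField (Y a))
    (hYbound : ∃ C : ℝ, 0 ≤ C ∧ ∀ (a : V) (n : ℤ), ‖Y a n‖ ≤ C * ‖a‖)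
    (u v w : V) (r s t : ℤ) :
    Summable (fun i : ℕ => Ring.choose r i • Y (Y u (t + i) v) (r + s - i) w) ∧
    Summable (fun i : ℕ =>
      ((-1) ^ i * Ring.choose t i : ℤ) • Y u (r + t - i) (Y v (s + i) w)) ∧
    Summable (fun i : ℕ =>
      ((((-1 : ℤˣ) ^ (t + i) : ℤˣ) : ℤ) * Ring.choose t i) •
        Y v (s + t - i) (Y u (r + i) w)) := by
  obtain ⟨C, -, hC⟩ := hYbound
  have hYw (a : V) (n : ℤ) : ‖Y a n w‖ ≤ C * ‖w‖ * ‖a‖ :=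
    ((Y a n).le_opNorm w).trans <| by
      rw [mul_right_comm]; exact mul_le_mul_of_nonneg_right (hC a n) (norm_nonneg w)
  refine ⟨summable_zsmul_of_tendsto_zero _ ?_, summable_zsmul_of_tendsto_zero _ ?_,
    summable_zsmul_of_tendsto_zero _ ?_⟩
  · exact (Asymptotics.IsBigO.of_bound _ (Eventually.of_forall fun i => hYw _ _)).trans_tendsto
      ((hfield u).tendsto_add_nat t v)
  · exact (hfield u).tendsto_apply_of_tendsto_zero _ ((hfield v).tendsto_add_nat s w)
  · exact (hfield v).tendsto_apply_of_tendsto_zero _ ((hfield u).tendsto_add_nat r w)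
end

section
/- Let V be a p-adic Banach space and let a(z), b(z) be p-adic fields on V. For t ∈ ℤ define the t-th residue product by its modes (a(z)_t b(z))(n) = ∑_{i≥0} (-1)^i C(t,i) ( a(t-i)b(n+i) - (-1)^t b(t+n-i)a(i) ). Then a(z)_t b(z) is again a p-adic field and |a(z)_t b(z)| ≤ |a(z)||b(z)| in the sup-norm. -/
open Filter

variable {p : ℕ} [Fact p.Prime] {V : Type*} [NormedAddCommGroup V] [NormedSpace ℚ_[p] V]

private lemma zsmul_norm_le' {p : ℕ} [Fact p.Prime] {W : Type*} [NormedAddCommGroup W]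
    [NormedSpace ℚ_[p] W] (z : ℤ) (v : W) : ‖z • v‖ ≤ ‖v‖ := by
  rw [← Int.cast_smul_eq_zsmul ℚ_[p], norm_smul]
  exact mul_le_of_le_one_left (norm_nonneg v) (Padic.norm_int_le_one z)

private lemma ultra_sub_le [IsUltrametricDist V] (x y : V) : ‖x - y‖ ≤ max ‖x‖ ‖y‖ := by
  rw [sub_eq_add_neg]
  simpa using IsUltrametricDist.norm_add_le_max x (-y)

/-- The `t`-th residue product of two `p`-adic fields is again a `p`-adic field,
whose modes are given by
`(a(z)ₜb(z))(n) = ∑_{i≥0} (-1)^i C(t,i) ( a(t-i)b(n+i) - (-1)^t b(t+n-i)a(i) )`,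
and its sup-norm satisfies `|a(z)ₜ b(z)| ≤ |a(z)||b(z)|`. -/
theorem residue_product_is_padic_field
    [CompleteSpace V] [IsUltrametricDist V]
    (A B : ℤ → V →L[ℚ_[p]] V) (hA : IsPadicField A) (hB : IsPadicField B) (t : ℤ) :
    ∃ R : ℤ → V →L[ℚ_[p]] V, IsPadicField R ∧
      (∀ (n : ℤ) (c : V), R n c =
        ∑' i : ℕ, ((-1) ^ i * Ring.choose t i : ℤ) •
          (A (t - i) (B (n + i) c)
            - (((-1 : ℤˣ) ^ t : ℤˣ) : ℤ) • B (t + n - i) (A i c))) ∧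
      (⨆ n : ℤ, ‖R n‖) ≤ (⨆ n : ℤ, ‖A n‖) * ⨆ n : ℤ, ‖B n‖ := by
  obtain ⟨⟨MA, hMA0, hMA⟩, hAt⟩ := hA
  obtain ⟨⟨MB, hMB0, hMB⟩, hBt⟩ := hB
  set SA : ℝ := ⨆ n : ℤ, ‖A n‖ with hSAdef
  set SB : ℝ := ⨆ n : ℤ, ‖B n‖ with hSBdef
  have bddA : BddAbove (Set.range fun n : ℤ => ‖A n‖) :=
    ⟨MA, by rintro _ ⟨n, rfl⟩; exact ContinuousLinearMap.opNorm_le_bound _ hMA0 (hMA n)⟩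
  have bddB : BddAbove (Set.range fun n : ℤ => ‖B n‖) :=
    ⟨MB, by rintro _ ⟨n, rfl⟩; exact ContinuousLinearMap.opNorm_le_bound _ hMB0 (hMB n)⟩
  have hSA : ∀ n : ℤ, ‖A n‖ ≤ SA := fun n => le_ciSup bddA n
  have hSB : ∀ n : ℤ, ‖B n‖ ≤ SB := fun n => le_ciSup bddB n
  have hSA0 : 0 ≤ SA := le_trans (norm_nonneg _) (hSA 0)
  have hSB0 : 0 ≤ SB := le_trans (norm_nonneg _) (hSB 0)
  -- the summand
  set f : ℤ → V → ℕ → V := fun n c i =>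
    ((-1) ^ i * Ring.choose t i : ℤ) •
      (A (t - i) (B (n + i) c)
        - (((-1 : ℤˣ) ^ t : ℤˣ) : ℤ) • B (t + n - i) (A i c)) with hfdef
  -- key pointwise estimate
  have hkey : ∀ (n : ℤ) (c : V) (i : ℕ),
      ‖f n c i‖ ≤ max ‖A (t - i) (B (n + i) c)‖ ‖B (t + n - i) (A i c)‖ := by
    intro n c i
    refine (zsmul_norm_le' (p := p) _ _).trans ?_
    refine (ultra_sub_le _ _).trans ?_
    exact max_le_max le_rfl (zsmul_norm_le' (p := p) _ _)
  have hbig : ∀ (n : ℤ) (c : V) (i : ℕ), ‖f n c i‖ ≤ SA * (SB * ‖c‖) := by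
    intro n c i
    refine (hkey n c i).trans (max_le ?_ ?_)
    · calc ‖A (t - i) (B (n + i) c)‖ ≤ ‖A (t - i)‖ * ‖B (n + i) c‖ :=
            (A (t - i)).le_opNorm _
        _ ≤ SA * (SB * ‖c‖) := by
            refine mul_le_mul (hSA _) ?_ (norm_nonneg _) hSA0
            exact ((B (n + i)).le_opNorm c).trans
              (mul_le_mul_of_nonneg_right (hSB _) (norm_nonneg c))
    · calc ‖B (t + n - i) (A i c)‖ ≤ ‖B (t + n - i)‖ * ‖A i c‖ :=
            (B (t + n - i)).le_opNorm _
        _ ≤ SB * (SA * ‖c‖) := by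
            refine mul_le_mul (hSB _) ?_ (norm_nonneg _) hSB0
            exact ((A i).le_opNorm c).trans
              (mul_le_mul_of_nonneg_right (hSA _) (norm_nonneg c))
        _ = SA * (SB * ‖c‖) := by ring
  have hnatcast : Tendsto (fun i : ℕ => (i : ℤ)) atTop atTop := tendsto_natCast_atTop_atTop
  -- summability
  have hsum : ∀ (n : ℤ) (c : V), Summable (f n c) := by
    intro n c
    apply NonarchimedeanAddGroup.summable_of_tendsto_cofinite_zero
    rw [Nat.cofinite_eq_atTop]
    have hBn : Tendsto (fun i : ℕ => SA * ‖B (n + i) c‖) atTop (nhds 0) := by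
      have : Tendsto (fun i : ℕ => (n + i : ℤ)) atTop atTop :=
        tendsto_atTop_add_const_left _ n hnatcast
      simpa using (((hBt c).comp this).norm.const_mul SA)
    have hAn : Tendsto (fun i : ℕ => SB * ‖A i c‖) atTop (nhds 0) := by
      simpa using ((hAt c).comp hnatcast).norm.const_mul SB
    have hmax : Tendsto (fun i : ℕ => max (SA * ‖B (n + i) c‖) (SB * ‖A i c‖))
        atTop (nhds 0) := by
      simpa using hBn.max hAn
    refine squeeze_zero_norm (fun i => ?_) hmax
    refine (hkey n c i).trans (max_le_max ?_ ?_)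
    · exact ((A (t - i)).le_opNorm _).trans
        (mul_le_mul_of_nonneg_right (hSA _) (norm_nonneg _))
    · exact ((B (t + n - i)).le_opNorm _).trans
        (mul_le_mul_of_nonneg_right (hSB _) (norm_nonneg _))
  -- tsum norm bound
  have hnormsum : ∀ (n : ℤ) (c : V), ‖∑' i, f n c i‖ ≤ SA * SB * ‖c‖ := by
    intro n c
    rw [mul_assoc]
    exact IsUltrametricDist.norm_tsum_le_of_forall_le_of_nonneg
      (by positivity) (hbig n c)
  -- the residue product modes
  set R : ℤ → V →L[ℚ_[p]] V := fun n =>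
    LinearMap.mkContinuous
      { toFun := fun c => ∑' i, f n c i
        map_add' := by
          intro c d
          show (∑' i, f n (c + d) i) = (∑' i, f n c i) + ∑' i, f n d i
          rw [← Summable.tsum_add (hsum n c) (hsum n d)]
          exact tsum_congr fun i => by
            simp only [hfdef, map_add, smul_add, add_sub_add_comm]
        map_smul' := by
          intro r c
          show (∑' i, f n (r • c) i) = r • ∑' i, f n c i
          rw [← Summable.tsum_const_smul r (hsum n c)]
          exact tsum_congr fun i => by
            simp only [hfdef, map_smul, smul_sub, smul_comm r] }
      (SA * SB) (fun c => hnormsum n c) with hRdef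
  have hRapply : ∀ (n : ℤ) (c : V), R n c = ∑' i, f n c i := fun n c => rfl
  refine ⟨R, ⟨⟨SA * SB, mul_nonneg hSA0 hSB0, fun n c => hnormsum n c⟩, ?_⟩,
    fun n c => rfl, ?_⟩
  · -- tendsto
    intro c
    rw [NormedAddCommGroup.tendsto_nhds_zero]
    intro ε hε
    set K : ℝ := max SA SB + 1 with hKdef
    have hK0 : 0 < K := by positivity
    have hSAK : SA ≤ K := le_trans (le_max_left _ _) (by linarith)
    have hSBK : SB ≤ K := le_trans (le_max_right _ _) (by linarith)
    set δ : ℝ := (ε / 2) / K with hδdef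
    have hδ0 : 0 < δ := by positivity
    have hKδ : K * δ = ε / 2 := by
      rw [hδdef]
      field_simp
    -- choose I for ‖A i c‖
    have h1 : ∀ᶠ i : ℕ in atTop, ‖A i c‖ < δ := by
      have := (NormedAddCommGroup.tendsto_nhds_zero.mp ((hAt c).comp hnatcast)) δ hδ0
      simpa using this
    obtain ⟨I, hI⟩ := eventually_atTop.mp h1
    -- eventually in n : first term control
    have h2 : ∀ᶠ m : ℤ in atTop, ‖B m c‖ < δ := by
      simpa using (NormedAddCommGroup.tendsto_nhds_zero.mp (hBt c)) δ hδ0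
    obtain ⟨N1, hN1⟩ := eventually_atTop.mp h2
    -- second term control for small i
    have h3 : ∀ᶠ m : ℤ in atTop, ∀ j ∈ Finset.range I, ‖B m (A j c)‖ < ε / 2 := by
      rw [eventually_all_finset]
      intro j _
      simpa using (NormedAddCommGroup.tendsto_nhds_zero.mp (hBt (A j c))) (ε / 2)
        (by positivity)
    obtain ⟨N2, hN2⟩ := eventually_atTop.mp h3
    rw [eventually_atTop]
    refine ⟨max N1 (N2 + I - t), fun n hn => ?_⟩
    have hnN1 : N1 ≤ n := le_trans (le_max_left _ _) hn
    have hnN2 : N2 + I - t ≤ n := le_trans (le_max_right _ _) hn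
    have hterm : ∀ i : ℕ, ‖f n c i‖ ≤ ε / 2 := by
      intro i
      rcases le_or_gt I i with hi | hi
      · -- large i : use the ‖A i c‖ bound on the second component,
        -- and the ‖B (n+i) c‖ bound on the first
        refine (hkey n c i).trans (max_le ?_ ?_)
        · have hb : ‖B (n + i) c‖ < δ := hN1 _ (by omega)
          calc ‖A (t - i) (B (n + i) c)‖ ≤ SA * ‖B (n + i) c‖ :=
                ((A (t - i)).le_opNorm _).trans
                  (mul_le_mul_of_nonneg_right (hSA _) (norm_nonneg _))
            _ ≤ K * δ := mul_le_mul hSAK hb.le (norm_nonneg _) hK0.le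
            _ = ε / 2 := hKδ
        · have ha : ‖A (i : ℤ) c‖ < δ := hI i hi
          calc ‖B (t + n - i) (A i c)‖ ≤ SB * ‖A (i : ℤ) c‖ :=
                ((B (t + n - i)).le_opNorm _).trans
                  (mul_le_mul_of_nonneg_right (hSB _) (norm_nonneg _))
            _ ≤ K * δ := mul_le_mul hSBK ha.le (norm_nonneg _) hK0.le
            _ = ε / 2 := hKδ
      · -- small i : use B-tendsto at the vectors A j c
        refine (hkey n c i).trans (max_le ?_ ?_)
        · have hb : ‖B (n + i) c‖ < δ := hN1 _ (by omega)
          calc ‖A (t - i) (B (n + i) c)‖ ≤ SA * ‖B (n + i) c‖ :=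
                ((A (t - i)).le_opNorm _).trans
                  (mul_le_mul_of_nonneg_right (hSA _) (norm_nonneg _))
            _ ≤ K * δ := mul_le_mul hSAK hb.le (norm_nonneg _) hK0.le
            _ = ε / 2 := hKδ
        · exact (hN2 (t + n - i) (by omega) i (Finset.mem_range.mpr hi)).le
    have : ‖R n c‖ ≤ ε / 2 := by
      rw [hRapply]
      exact IsUltrametricDist.norm_tsum_le_of_forall_le_of_nonneg
        (by positivity) hterm
    linarith
  · -- sup-norm bound
    refine ciSup_le fun n => ?_
    exact LinearMap.mkContinuous_norm_le _ (mul_nonneg hSA0 hSB0) _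
end

section
/- Let V be a p-adic Banach space, a(z), b(z) p-adic fields on V, 𝟏 ∈ V, and suppose b(z) is creative with respect to 𝟏 (b(n)𝟏 = 0 for n ≥ 0, b(-1)𝟏 = b) and a(z) is creative with respect to 𝟏. Then for every t ∈ ℤ the residue product a(z)_t b(z) is creative with respect to 𝟏 and creates the state a(t)b, i.e. (a(z)_t b(z))(n)𝟏 = 0 for n ≥ 0 and (a(z)_t b(z))(-1)𝟏 = a(t)b. -/
open Filter

variable {p : ℕ} [Fact p.Prime] {V : Type*} [NormedAddCommGroup V] [NormedSpace ℚ_[p] V]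

/-! Every summand of `(a(z)ₜ b(z))(n) 𝟏` contains a nonnegative mode of `a` or `b` applied
directly to `𝟏`, except the `i = 0` summand for `n = -1`, which is `a(t) b(-1) 𝟏 = a(t) b`. -/

section ResidueProduct

variable {M F : Type*} [AddCommGroup M] [FunLike F M M] [AddMonoidHomClass F M M]
  {A B : ℤ → F} {one : M}

theorem residueProduct_summand_eq_zero (hA : ∀ n : ℤ, 0 ≤ n → A n one = 0)
    (hB : ∀ n : ℤ, 0 ≤ n → B n one = 0) (t : ℤ) {n : ℤ} {i : ℕ} (hni : 0 ≤ n + i) :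
    ((-1) ^ i * Ring.choose t i : ℤ) •
      (A (t - i) (B (n + i) one) - (((-1 : ℤˣ) ^ t : ℤˣ) : ℤ) • B (t + n - i) (A i one)) = 0 := by
  rw [hB (n + i) hni, hA i (Int.natCast_nonneg i)]
  simp

theorem residueProduct_summand_zero (hA : ∀ n : ℤ, 0 ≤ n → A n one = 0) (t n : ℤ) :
    ((-1) ^ (0 : ℕ) * Ring.choose t (0 : ℕ) : ℤ) •
      (A (t - (0 : ℕ)) (B (n + (0 : ℕ)) one)
        - (((-1 : ℤˣ) ^ t : ℤˣ) : ℤ) • B (t + n - (0 : ℕ)) (A (0 : ℕ) one)) =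
      A t (B n one) := by
  rw [Nat.cast_zero, hA 0 le_rfl]
  simp

end ResidueProduct

theorem residue_product_creative_general
    (A B : ℤ → V →L[ℚ_[p]] V)
    (one a b : V)
    (hAcreate : (∀ n : ℤ, 0 ≤ n → A n one = 0) ∧ A (-1) one = a)
    (hBcreate : (∀ n : ℤ, 0 ≤ n → B n one = 0) ∧ B (-1) one = b)
    (t : ℤ) :
    (∀ n : ℤ, 0 ≤ n →
      (∑' i : ℕ, ((-1) ^ i * Ring.choose t i : ℤ) •
        (A (t - i) (B (n + i) one)
          - (((-1 : ℤˣ) ^ t : ℤˣ) : ℤ) • B (t + n - i) (A i one))) = 0) ∧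
    (∑' i : ℕ, ((-1) ^ i * Ring.choose t i : ℤ) •
        (A (t - i) (B (-1 + i) one)
          - (((-1 : ℤˣ) ^ t : ℤˣ) : ℤ) • B (t + -1 - i) (A i one))) = A t b := by
  obtain ⟨hA, -⟩ := hAcreate
  obtain ⟨hB, rfl⟩ := hBcreate
  refine ⟨fun n hn => ?_, ?_⟩
  · refine (tsum_congr fun i => ?_).trans tsum_zero
    exact residueProduct_summand_eq_zero hA hB t (by positivity)
  · rw [tsum_eq_single 0 fun i hi => residueProduct_summand_eq_zero hA hB t (by omega)]
    exact residueProduct_summand_zero hA t (-1)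

/-- If the `p`-adic fields `a(z)` and `b(z)` are creative with respect to `𝟏`
(creating the states `a` and `b` respectively), then for every `t ∈ ℤ` the residue
product `a(z)ₜ b(z)` is creative with respect to `𝟏` and creates the state `a(t)b`:
its `n`-th mode kills `𝟏` for `n ≥ 0` and its `(-1)`-st mode applied to `𝟏` is `a(t)b`. -/
theorem residue_product_creative
    [CompleteSpace V] [IsUltrametricDist V]
    (A B : ℤ → V →L[ℚ_[p]] V) (hA : IsPadicField A) (hB : IsPadicField B)
    (one a b : V)
    (hAcreate : (∀ n : ℤ, 0 ≤ n → A n one = 0) ∧ A (-1) one = a)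
    (hBcreate : (∀ n : ℤ, 0 ≤ n → B n one = 0) ∧ B (-1) one = b)
    (t : ℤ) :
    (∀ n : ℤ, 0 ≤ n →
      (∑' i : ℕ, ((-1) ^ i * Ring.choose t i : ℤ) •
        (A (t - i) (B (n + i) one)
          - (((-1 : ℤˣ) ^ t : ℤˣ) : ℤ) • B (t + n - i) (A i one))) = 0) ∧
    (∑' i : ℕ, ((-1) ^ i * Ring.choose t i : ℤ) •
        (A (t - i) (B (-1 + i) one)
          - (((-1 : ℤˣ) ^ t : ℤˣ) : ℤ) • B (t + -1 - i) (A i one))) = A t b :=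
  residue_product_creative_general A B one a b hAcreate hBcreate t
end

section
/- Let p be an odd prime, let a ≤ b be nonnegative integers, and set r = 1 + p^a(p-1), s = 1 + p^b(p-1). Then for every integer m ≥ 0, c(r,m) ≡ c(s,m) (mod p^{a+1}), where c(r,m) = ∑_{j=0}^{m} (-1)^{m+j} C(m,j) (j+1)^{r-1}. -/
/-- Congruences for the coefficients `c(r,m) = ∑_{j=0}^m (-1)^{m+j} C(m,j) (j+1)^{r-1}`:
for an odd prime `p`, nonnegative integers `a ≤ b`, and `r = 1 + pᵃ(p-1)`,
`s = 1 + pᵇ(p-1)`, we have `c(r,m) ≡ c(s,m) (mod p^{a+1})` for every `m ≥ 0`. -/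
theorem heisenberg_coefficient_congruence
    (p : ℕ) (hp : p.Prime) (hodd : Odd p) (a b : ℕ) (hab : a ≤ b) (m : ℕ)
    (r s : ℕ) (hr : r = 1 + p ^ a * (p - 1)) (hs : s = 1 + p ^ b * (p - 1)) :
    ((p : ℤ) ^ (a + 1)) ∣
      ((∑ j ∈ Finset.range (m + 1),
          (-1 : ℤ) ^ (m + j) * (m.choose j : ℤ) * ((j : ℤ) + 1) ^ (r - 1)) -
        ∑ j ∈ Finset.range (m + 1),
          (-1 : ℤ) ^ (m + j) * (m.choose j : ℤ) * ((j : ℤ) + 1) ^ (s - 1)) := by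
  rw [← Finset.sum_sub_distrib]
  apply Finset.dvd_sum
  intro j _
  have key : ((p : ℤ) ^ (a + 1)) ∣ ((j : ℤ) + 1) ^ (r - 1) - ((j : ℤ) + 1) ^ (s - 1) := by
    have hr1 : r - 1 = p ^ a * (p - 1) := by omega
    have hs1 : s - 1 = p ^ b * (p - 1) := by omega
    by_cases hdvd : p ∣ (j + 1)
    · -- both powers are divisible by p^(a+1)
      have hexp : a + 1 ≤ p ^ a * (p - 1) := by
        have h1 : a < p ^ a := Nat.lt_pow_self (n := a) hp.one_lt
        have h2 : 1 ≤ p - 1 := by have := hp.two_le; omega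
        calc a + 1 ≤ p ^ a := h1
          _ = p ^ a * 1 := by ring
          _ ≤ p ^ a * (p - 1) := Nat.mul_le_mul_left _ h2
      have hdvdI : (p : ℤ) ∣ ((j : ℤ) + 1) := by exact_mod_cast Int.natCast_dvd_natCast.mpr hdvd
      have h1 : ((p : ℤ) ^ (a + 1)) ∣ ((j : ℤ) + 1) ^ (r - 1) := by
        refine dvd_trans (pow_dvd_pow _ ?_) (pow_dvd_pow_of_dvd hdvdI _)
        omega
      have h2 : ((p : ℤ) ^ (a + 1)) ∣ ((j : ℤ) + 1) ^ (s - 1) := by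
        refine dvd_trans (pow_dvd_pow _ ?_) (pow_dvd_pow_of_dvd hdvdI _)
        have : p ^ a ≤ p ^ b := Nat.pow_le_pow_right hp.pos hab
        calc a + 1 ≤ p ^ a * (p - 1) := hexp
          _ ≤ p ^ b * (p - 1) := Nat.mul_le_mul_right _ this
          _ = s - 1 := hs1.symm
      exact dvd_sub h1 h2
    · -- coprime case: both powers ≡ 1 mod p^(a+1) by Euler
      have hcop : Nat.Coprime (j + 1) (p ^ (a + 1)) :=
        (Nat.Prime.coprime_iff_not_dvd hp).mpr hdvd |>.symm.pow_right _
      have htot : (p ^ (a + 1)).totient = p ^ a * (p - 1) := by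
        rw [Nat.totient_prime_pow hp (Nat.succ_pos a)]
        simp
      have euler : (j + 1) ^ (p ^ a * (p - 1)) ≡ 1 [MOD p ^ (a + 1)] := by
        rw [← htot]; exact Nat.ModEq.pow_totient hcop
      have hR : (j + 1) ^ (r - 1) ≡ 1 [MOD p ^ (a + 1)] := by rw [hr1]; exact euler
      have hS : (j + 1) ^ (s - 1) ≡ 1 [MOD p ^ (a + 1)] := by
        have : s - 1 = (p ^ a * (p - 1)) * p ^ (b - a) := by
          rw [hs1, mul_right_comm, ← pow_add, show a + (b - a) = b by omega]
        rw [this, pow_mul]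
        calc ((j + 1) ^ (p ^ a * (p - 1))) ^ p ^ (b - a)
            ≡ 1 ^ p ^ (b - a) [MOD p ^ (a + 1)] := euler.pow _
          _ = 1 := one_pow _
      have := (hR.trans hS.symm).dvd
      have hcast : ((p ^ (a + 1) : ℕ) : ℤ) ∣
          ((((j + 1) ^ (s - 1) : ℕ) : ℤ) - (((j + 1) ^ (r - 1) : ℕ) : ℤ)) := by
        exact_mod_cast this
      push_cast at hcast
      have := dvd_neg.mpr hcast
      rwa [neg_sub] at this
  rw [← mul_sub]
  exact Dvd.dvd.mul_left key _
end
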